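/- For 0 < q < 1, z > 0, and n ≥ 1, we have (q - q^{n+2})/(1 - q^{n+2}) · (J_n(q;z))^2 ≤ J_{n-1}(q;z) · J_{n+1}(q;z), where J_n(q;z) = Σ_{k=n+1}^∞ q^{k(k-1)/2} z^k/(q;q)_k. -/

import Mathlib

open Finset Filter Topology

noncomputable def qPoch (q : ℝ) (m : ℕ) : ℝ := ∏ j ∈ Finset.range m, (1 - q ^ (j + 1))

/-- Tail of the q-exponential e(q;z) starting at index m; I_n(q;z) = qexpTail q z (n+1). -/
noncomputable def qexpTail (q z : ℝ) (m : ℕ) : ℝ := ∑' k : ℕ, z ^ (m + k) / qPoch q (m + k)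

/-- Tail of the q-exponential E(q;z) starting at index m; J_n(q;z) = qExpTail q z (n+1). -/
noncomputable def qExpTail (q z : ℝ) (m : ℕ) : ℝ :=
  ∑' k : ℕ, q ^ ((m + k) * (m + k - 1) / 2) * z ^ (m + k) / qPoch q (m + k)

/-! The terms `a_m = q^(m(m-1)/2) z^m / (q;q)_m` of `E(q;z)` have ratios
`a_(m+1) / a_m = q^m z / (1 - q^(m+1))`, so `a_m a_(m+2) = c_m a_(m+1)^2` with
`c_m = (q - q^(m+2)) / (1 - q^(m+2))`, and `c_m` increases with `m`. Hence
`c_n a_(m+1)^2 ≤ a_m a_(m+2)` for all `m ≥ n`, and the Cauchy–Schwarz inequality for series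
turns this termwise inequality into the inequality between the tails. -/

theorem tsum_sq_le_tsum_mul_tsum_of_sq_le_mul {ι : Type*} {r f g : ι → ℝ}
    (hf : Summable f) (hg : Summable g) (hf0 : ∀ i, 0 ≤ f i) (hg0 : ∀ i, 0 ≤ g i)
    (h : ∀ i, r i ^ 2 ≤ f i * g i) : (∑' i, r i) ^ 2 ≤ (∑' i, f i) * ∑' i, g i := by
  by_cases hr : Summable r
  · exact le_of_tendsto_of_tendsto' (hr.hasSum.pow 2) (Tendsto.mul hf.hasSum hg.hasSum) fun s =>
      Finset.sum_sq_le_sum_mul_sum_of_sq_le_mul s (fun i _ => hf0 i) (fun i _ => hg0 i)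
        (fun i _ => h i)
  · rw [tsum_eq_zero_of_not_summable hr, sq, zero_mul]
    exact mul_nonneg (tsum_nonneg hf0) (tsum_nonneg hg0)

section QExp

variable {q : ℝ} (z : ℝ)

noncomputable def qExpTerm (q z : ℝ) (m : ℕ) : ℝ := q ^ (m * (m - 1) / 2) * z ^ m / qPoch q m

theorem qExpTail_eq_tsum (m : ℕ) : qExpTail q z m = ∑' k, qExpTerm q z (m + k) := rfl

theorem qPoch_succ (m : ℕ) : qPoch q (m + 1) = qPoch q m * (1 - q ^ (m + 1)) :=
  Finset.prod_range_succ _ _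

theorem one_sub_pow_succ_pos (hq0 : 0 ≤ q) (hq1 : q < 1) (m : ℕ) : 0 < 1 - q ^ (m + 1) :=
  sub_pos.2 (pow_lt_one₀ hq0 hq1 m.succ_ne_zero)

theorem qPoch_pos (hq0 : 0 ≤ q) (hq1 : q < 1) (m : ℕ) : 0 < qPoch q m :=
  Finset.prod_pos fun j _ => one_sub_pow_succ_pos hq0 hq1 j

theorem qExpTerm_nonneg (hq0 : 0 ≤ q) (hq1 : q < 1) {z : ℝ} (hz : 0 ≤ z) (m : ℕ) :
    0 ≤ qExpTerm q z m := by
  unfold qExpTerm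
  have := qPoch_pos hq0 hq1 m
  positivity

theorem qExpTerm_succ (m : ℕ) :
    qExpTerm q z (m + 1) = qExpTerm q z m * (q ^ m * z / (1 - q ^ (m + 1))) := by
  rw [qExpTerm, qExpTerm, qPoch_succ, Nat.triangle_succ, pow_add, pow_succ, div_mul_div_comm]
  ring

theorem summable_qExpTerm (hq0 : 0 ≤ q) (hq1 : q < 1) : Summable (qExpTerm q z) := by
  have hpow : Tendsto (fun m : ℕ => q ^ m) atTop (𝓝 0) :=
    tendsto_pow_atTop_nhds_zero_of_lt_one hq0 hq1
  have hratio : Tendsto (fun m : ℕ => q ^ m * z / (1 - q ^ (m + 1))) atTop (𝓝 0) := by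
    simp_rw [pow_succ]
    simpa [Pi.div_def] using (hpow.mul_const z).div (tendsto_const_nhds.sub (hpow.mul_const q)) (by simp)
  refine summable_of_ratio_norm_eventually_le (by norm_num : (1 / 2 : ℝ) < 1) ?_
  filter_upwards [(hratio.norm.eventually_le_const (by norm_num : ‖(0 : ℝ)‖ < 1 / 2))]
    with m hm
  rw [qExpTerm_succ, norm_mul, mul_comm]
  exact mul_le_mul_of_nonneg_right hm (norm_nonneg _)

theorem summable_qExpTerm_add (hq0 : 0 ≤ q) (hq1 : q < 1) (m : ℕ) :
    Summable fun k => qExpTerm q z (m + k) := by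
  simpa only [add_comm m] using (summable_nat_add_iff m).2 (summable_qExpTerm z hq0 hq1)

theorem turanRatio_mul_qExpTerm_sq (hq0 : 0 ≤ q) (hq1 : q < 1) (m : ℕ) :
    (q - q ^ (m + 2)) / (1 - q ^ (m + 2)) * qExpTerm q z (m + 1) ^ 2 =
      qExpTerm q z m * qExpTerm q z (m + 2) := by
  have h1 := (one_sub_pow_succ_pos hq0 hq1 m).ne'
  have h2 := (one_sub_pow_succ_pos hq0 hq1 (m + 1)).ne'
  rw [qExpTerm_succ z (m + 1), qExpTerm_succ z m]
  field_simp
  ring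

theorem turanRatio_mono (hq0 : 0 ≤ q) (hq1 : q < 1) {n m : ℕ} (hnm : n ≤ m) :
    (q - q ^ (n + 2)) / (1 - q ^ (n + 2)) ≤ (q - q ^ (m + 2)) / (1 - q ^ (m + 2)) := by
  have hpow : q ^ (m + 1) ≤ q ^ (n + 1) := pow_le_pow_of_le_one hq0 hq1.le (by omega)
  rw [div_le_div_iff₀ (one_sub_pow_succ_pos hq0 hq1 _) (one_sub_pow_succ_pos hq0 hq1 _)]
  simp only [pow_succ] at hpow ⊢
  -- the cross-multiplied difference is `q (1 - q) (q^(m+1) - q^(n+1))`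
  nlinarith [mul_nonneg (mul_nonneg hq0 (sub_nonneg.2 hq1.le)) (sub_nonneg.2 hpow)]

theorem turanRatio_mul_qExpTerm_sq_le (hq0 : 0 ≤ q) (hq1 : q < 1) {n m : ℕ} (hnm : n ≤ m) :
    (q - q ^ (n + 2)) / (1 - q ^ (n + 2)) * qExpTerm q z (m + 1) ^ 2 ≤
      qExpTerm q z m * qExpTerm q z (m + 2) := by
  rw [← turanRatio_mul_qExpTerm_sq z hq0 hq1 m]
  exact mul_le_mul_of_nonneg_right (turanRatio_mono hq0 hq1 hnm) (sq_nonneg _)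

end QExp

theorem turan_left_J_general (q z : ℝ) (n : ℕ) (hq0 : 0 < q) (hq1 : q < 1)
    (hz : 0 < z) :
    (q - q ^ (n + 2)) / (1 - q ^ (n + 2)) * (qExpTail q z (n + 1)) ^ 2 ≤
      qExpTail q z n * qExpTail q z (n + 2) := by
  set c := (q - q ^ (n + 2)) / (1 - q ^ (n + 2))
  have hc : 0 < c := div_pos (sub_pos.2 (pow_lt_self_of_lt_one₀ hq0 hq1 (by omega)))
    (one_sub_pow_succ_pos hq0.le hq1 (n + 1))
  have hnonneg := qExpTerm_nonneg hq0.le hq1 hz.le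
  have hsum := summable_qExpTerm_add z hq0.le hq1
  have hCS := tsum_sq_le_tsum_mul_tsum_of_sq_le_mul
    (r := fun k => c * qExpTerm q z (n + 1 + k)) ((hsum n).mul_left c) (hsum (n + 2))
    (fun k => mul_nonneg hc.le (hnonneg _)) (fun k => hnonneg _) fun k => by
      have := turanRatio_mul_qExpTerm_sq_le z hq0.le hq1 (Nat.le_add_right n k)
      rw [show n + k + 1 = n + 1 + k by omega, show n + k + 2 = n + 2 + k by omega] at this
      nlinarith
  simp only [tsum_mul_left, ← qExpTail_eq_tsum, mul_pow] at hCS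
  -- `hCS` is the claim multiplied by `c > 0`
  exact le_of_mul_le_mul_left (by linarith) hc

theorem turan_left_J (q z : ℝ) (n : ℕ) (hq0 : 0 < q) (hq1 : q < 1)
    (hz : 0 < z) (hn : 1 ≤ n) :
    (q - q ^ (n + 2)) / (1 - q ^ (n + 2)) * (qExpTail q z (n + 1)) ^ 2 ≤
      qExpTail q z n * qExpTail q z (n + 2) :=
  turan_left_J_general q z n hq0 hq1 hz
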